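/- For any sequence of reals 1 > r_1 > r_2 > ... strictly decreasing to 0, there exists a probability distribution μ on ℕ such that for all m ≥ 1, the expected total variation risk of the empirical measure satisfies 2·E_{X ~ μ^m}[‖μ − μ̂_m‖_TV] > r_m; that is, the convergence of the TV risk to 0 can be arbitrarily slow. -/

import Mathlib

open scoped BigOperators

/-- The empirical measure induced by a sample `x` of size `m`:
`μ̂_m(i) = (1/m) ∑_t 1{x_t = i}`. -/
noncomputable def empMeas (m : ℕ) (x : Fin m → ℕ) (i : ℕ) : ℝ :=
  ((Finset.univ.filter (fun t => x t = i)).card : ℝ) / m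

/-- Total variation distance `(1/2) ∑_i |μ(i) - ν(i)|`. -/
noncomputable def tvDist (μ ν : ℕ → ℝ) : ℝ := (1 / 2) * ∑' i, |μ i - ν i|

/-- `Φ_m(ν) = (1/√m) ∑_j √(ν j)`. -/
noncomputable def Phi (m : ℕ) (ν : ℕ → ℝ) : ℝ :=
  (1 / Real.sqrt m) * ∑' j, Real.sqrt (ν j)

/-- `μ` is a probability distribution on ℕ. -/
def IsProb (μ : ℕ → ℝ) : Prop := (∀ i, 0 ≤ μ i) ∧ ∑' i, μ i = 1

/-- Probability of the event `A` under the i.i.d. product `μ^m`. -/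
noncomputable def probOf (μ : ℕ → ℝ) (m : ℕ) (A : Set (Fin m → ℕ)) : ℝ :=
  ∑' x : Fin m → ℕ, Set.indicator A (fun y => ∏ t, μ (y t)) x

/-- Expectation of `f` under the i.i.d. product `μ^m`. -/
noncomputable def expect (μ : ℕ → ℝ) (m : ℕ) (f : (Fin m → ℕ) → ℝ) : ℝ :=
  ∑' x : Fin m → ℕ, (∏ t, μ (x t)) * f x

/-- Empirical Rademacher complexity of the class of all boolean functions on ℕ,
conditional on the sample `x`:
`R̂_m(x) = E_σ [ sup_{f : ℕ → {0,1}} (1/m) ∑_t σ_t f(x_t) ]`,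
with `σ` uniform on `{-1,1}^m`. -/
noncomputable def empRad (m : ℕ) (x : Fin m → ℕ) : ℝ :=
  (1 / 2 ^ m) * ∑ σ : Fin m → Bool,
    sSup (Set.range (fun f : ℕ → Bool =>
      (1 / (m : ℝ)) * ∑ t, (if σ t then (1 : ℝ) else -1) * (if f (x t) then (1 : ℝ) else 0)))

/-- `Λ_m(μ) = ∑_{j : μ(j) < 1/m} μ(j) + (1/(2√m)) ∑_{j : μ(j) ≥ 1/m} √(μ(j))`. -/
noncomputable def Lam (m : ℕ) (μ : ℕ → ℝ) : ℝ :=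
  (∑' j, Set.indicator {j | μ j < 1 / (m : ℝ)} μ j)
    + (1 / (2 * Real.sqrt m)) *
      ∑' j, Set.indicator {j | 1 / (m : ℝ) ≤ μ j} (fun j => Real.sqrt (μ j)) j

/-- The half-norm `‖ν‖_{1/2} = (∑_i √(ν i))²`. -/
noncomputable def hfnrm (ν : ℕ → ℝ) : ℝ := (∑' i, Real.sqrt (ν i)) ^ 2

/-- `T_μ(η)` with respect to a non-increasing rearrangement `π` of `μ`:
the least `t` such that the tail mass beyond the `t` largest atoms is `< η`
(ranks are 0-indexed). -/
noncomputable def truncT (μ : ℕ → ℝ) (π : ℕ ≃ ℕ) (η : ℝ) : ℕ :=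
  sInf {t : ℕ | ∑' i, μ (π (i + t)) < η}

/-- The truncation `μ[η]`: keep only the `T_μ(η)` largest atoms of `μ`
(as ranked by the non-increasing rearrangement `π`). -/
noncomputable def trunc (μ : ℕ → ℝ) (π : ℕ ≃ ℕ) (η : ℝ) (i : ℕ) : ℝ :=
  Set.indicator {i | π.symm i < truncT μ π η} μ i

/-! Every atom missed by the sample contributes its whole mass to `‖μ - μ̂_m‖₁`, so twice the
expected TV risk dominates the expected missing mass `∑ μ(i) (1 - μ(i))^m`. With
`s k = r (k + 1)`, split the mass `(s j - s (j + 1)) / s 0` of block `j` evenly over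
`(j + 1)(K + 1)` atoms. The blocks `j ≥ k` carry total mass `s k / s 0` by telescoping, and by
Bernoulli each of their atoms is missed by `k + 1` draws with probability at least
`1 - 1/(K + 1)`, which exceeds `s 0` for `K` large. So the missing mass exceeds `s k`. -/

open Filter Topology

theorem hasSum_prod_fin_pi {α : Type*} {g : α → ℝ} {a : ℝ} (hg : 0 ≤ g) (h : HasSum g a)
    (m : ℕ) : HasSum (fun x : Fin m → α => ∏ t, g (x t)) (a ^ m) := by
  induction m with
  | zero => simp
  | succ m ih =>
    have hP : 0 ≤ fun x : Fin m → α => ∏ t, g (x t) := fun x =>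
      Finset.prod_nonneg fun t _ => hg (x t)
    have hs := h.summable.mul_of_nonneg ih.summable hg hP
    have hprod := HasSum.mul h ih hs
    rw [← (Fin.consEquiv fun _ => α).hasSum_iff, pow_succ']
    refine hprod.congr_fun fun p => ?_
    simp only [Function.comp_apply, Fin.consEquiv_apply, Fin.prod_univ_succ, Fin.cons_zero,
      Fin.cons_succ]

theorem hasSum_prod_fin_pi_of_notMem_range {α : Type*} [DecidableEq α] {μ : α → ℝ}
    (hμ : 0 ≤ μ) (h : HasSum μ 1) (i : α) (m : ℕ) :
    HasSum (fun x : Fin m → α => if i ∈ Set.range x then 0 else ∏ t, μ (x t))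
      ((1 - μ i) ^ m) := by
  have hupd : 0 ≤ Function.update μ i 0 := by
    intro j; rcases eq_or_ne j i with rfl | hj
    · simp
    · simpa [hj] using hμ j
  convert hasSum_prod_fin_pi hupd (h.update i 0) m using 1
  · ext x
    split_ifs with hx
    · obtain ⟨t, rfl⟩ := hx
      exact (Finset.prod_eq_zero (Finset.mem_univ t) (by simp)).symm
    · refine Finset.prod_congr rfl fun t _ => ?_
      rw [Function.update_of_ne]
      exact fun ht => hx ⟨t, ht⟩
  · ring_nf

theorem IsProb.summable {μ : ℕ → ℝ} (hμ : IsProb μ) : Summable μ :=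
  by_contra fun h => one_ne_zero (hμ.2 ▸ tsum_eq_zero_of_not_summable h)

theorem IsProb.hasSum {μ : ℕ → ℝ} (hμ : IsProb μ) : HasSum μ 1 :=
  hμ.2 ▸ hμ.summable.hasSum

theorem IsProb.le_one {μ : ℕ → ℝ} (hμ : IsProb μ) (i : ℕ) : μ i ≤ 1 :=
  hμ.2 ▸ hμ.summable.le_tsum i fun j _ => hμ.1 j

theorem empMeas_eq_zero_of_notMem_range {m : ℕ} {x : Fin m → ℕ} {i : ℕ} (hi : i ∉ Set.range x) :
    empMeas m x i = 0 := by
  simp [empMeas, Finset.filter_false_of_mem fun t _ ht => hi ⟨t, ht⟩]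

theorem isProb_empMeas {m : ℕ} (hm : m ≠ 0) (x : Fin m → ℕ) : IsProb (empMeas m x) := by
  refine ⟨fun i => by unfold empMeas; positivity, ?_⟩
  rw [tsum_eq_sum (s := Finset.univ.image x) fun i hi =>
    empMeas_eq_zero_of_notMem_range fun ⟨t, ht⟩ =>
      hi (Finset.mem_image.mpr ⟨t, Finset.mem_univ t, ht⟩)]
  simp only [empMeas, ← Finset.sum_div, ← Nat.cast_sum]
  rw [← Finset.card_eq_sum_card_image, Finset.card_univ, Fintype.card_fin]
  exact div_self (Nat.cast_ne_zero.mpr hm)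

theorem summable_abs_sub {μ ν : ℕ → ℝ} (hμ : IsProb μ) (hν : IsProb ν) :
    Summable fun i => |μ i - ν i| :=
  (hμ.summable.sub hν.summable).abs

theorem tvDist_nonneg (μ ν : ℕ → ℝ) : 0 ≤ tvDist μ ν :=
  mul_nonneg (by norm_num) (tsum_nonneg fun _ => abs_nonneg _)

theorem tvDist_le_one {μ ν : ℕ → ℝ} (hμ : IsProb μ) (hν : IsProb ν) : tvDist μ ν ≤ 1 := by
  have hle : ∑' i, |μ i - ν i| ≤ ∑' i, (μ i + ν i) :=
    (summable_abs_sub hμ hν).tsum_le_tsum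
      (fun i => abs_sub_le_of_nonneg_of_le (hμ.1 i) (by linarith [hν.1 i]) (hν.1 i)
        (by linarith [hμ.1 i]))
      (hμ.summable.add hν.summable)
  rw [hμ.summable.tsum_add hν.summable, hμ.2, hν.2] at hle
  unfold tvDist
  linarith

theorem sum_ite_mem_range_le_two_mul_tvDist {μ : ℕ → ℝ} (hμ : IsProb μ) {m : ℕ} (hm : m ≠ 0)
    (x : Fin m → ℕ) (B : Finset ℕ) :
    ∑ i ∈ B, (if i ∈ Set.range x then 0 else μ i) ≤ 2 * tvDist μ (empMeas m x) := by
  calc ∑ i ∈ B, (if i ∈ Set.range x then 0 else μ i)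
      ≤ ∑ i ∈ B, |μ i - empMeas m x i| := by
        refine Finset.sum_le_sum fun i _ => ?_
        split_ifs with hi
        · exact abs_nonneg _
        · rw [empMeas_eq_zero_of_notMem_range hi, sub_zero, abs_of_nonneg (hμ.1 i)]
    _ ≤ ∑' i, |μ i - empMeas m x i| :=
        (summable_abs_sub hμ (isProb_empMeas hm x)).sum_le_tsum B fun i _ => abs_nonneg _
    _ = 2 * tvDist μ (empMeas m x) := by unfold tvDist; ring

theorem tsum_mul_one_sub_pow_le_two_mul_expect_tvDist {μ : ℕ → ℝ} (hμ : IsProb μ) {m : ℕ}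
    (hm : m ≠ 0) :
    ∑' i, μ i * (1 - μ i) ^ m ≤ 2 * expect μ m (fun x => tvDist μ (empMeas m x)) := by
  classical
  set P : (Fin m → ℕ) → ℝ := fun x => ∏ t, μ (x t)
  have hPnn : ∀ x, 0 ≤ P x := fun x => Finset.prod_nonneg fun t _ => hμ.1 (x t)
  have hP : Summable P := (hasSum_prod_fin_pi hμ.1 hμ.hasSum m).summable
  have hrisk : HasSum (fun x => P x * (2 * tvDist μ (empMeas m x)))
      (2 * expect μ m (fun x => tvDist μ (empMeas m x))) := by
    have hs : Summable fun x => P x * (2 * tvDist μ (empMeas m x)) :=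
      (hP.mul_right 2).of_nonneg_of_le
        (fun x => mul_nonneg (hPnn x) (mul_nonneg two_pos.le (tvDist_nonneg _ _)))
        fun x => mul_le_mul_of_nonneg_left
          (by linarith [tvDist_le_one hμ (isProb_empMeas hm x)]) (hPnn x)
    convert hs.hasSum using 1
    rw [expect, ← tsum_mul_left]
    exact tsum_congr fun x => by ring
  refine Real.tsum_le_of_sum_le
    (fun i => mul_nonneg (hμ.1 i) (pow_nonneg (sub_nonneg.mpr (hμ.le_one i)) m)) fun B => ?_
  refine hasSum_le (fun x => ?_)
    (hasSum_sum fun i _ => (hasSum_prod_fin_pi_of_notMem_range hμ.1 hμ.hasSum i m).mul_left (μ i))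
    hrisk
  calc ∑ i ∈ B, μ i * (if i ∈ Set.range x then 0 else P x)
      = P x * ∑ i ∈ B, (if i ∈ Set.range x then 0 else μ i) := by
        rw [Finset.mul_sum]
        exact Finset.sum_congr rfl fun i _ => by split_ifs <;> ring
    _ ≤ P x * (2 * tvDist μ (empMeas m x)) :=
        mul_le_mul_of_nonneg_left (sum_ite_mem_range_le_two_mul_tvDist hμ hm x B) (hPnn x)

theorem Antitone.hasSum_sub_succ {f : ℕ → ℝ} {l : ℝ} (hf : Antitone f)
    (hl : Tendsto f atTop (𝓝 l)) : HasSum (fun k => f k - f (k + 1)) (f 0 - l) := by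
  rw [hasSum_iff_tendsto_nat_of_nonneg fun k => sub_nonneg.mpr (hf k.le_succ)]
  simpa only [Finset.sum_range_sub'] using tendsto_const_nhds.sub hl

noncomputable def blockDist (w : ℕ → ℝ) (n : ℕ → ℕ) (i : ℕ) : ℝ :=
  if (Nat.unpair i).2 < n (Nat.unpair i).1 then w (Nat.unpair i).1 / n (Nat.unpair i).1 else 0

section BlockDist

variable {w : ℕ → ℝ} {n : ℕ → ℕ}

theorem blockDist_pair (j t : ℕ) :
    blockDist w n (Nat.pair j t) = if t < n j then w j / n j else 0 := by
  simp only [blockDist, Nat.unpair_pair]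

theorem hasSum_comp_blockDist {F : ℝ → ℝ} (hF0 : F 0 = 0) (hF : ∀ j, 0 ≤ F (w j / n j))
    (hs : Summable fun j => n j * F (w j / n j)) :
    HasSum (fun i => F (blockDist w n i)) (∑' j, n j * F (w j / n j)) := by
  rw [← Nat.pairEquiv.hasSum_iff]
  set f := (fun i => F (blockDist w n i)) ∘ Nat.pairEquiv
  have hf : ∀ j t, f (j, t) = if t < n j then F (w j / n j) else 0 := fun j t => by
    simp only [f, Function.comp_apply, Nat.pairEquiv_apply, Function.uncurry_apply_pair,
      blockDist_pair]
    split_ifs <;> simp [hF0]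
  have hfiber : ∀ j, HasSum (fun t => f (j, t)) (n j * F (w j / n j)) := fun j => by
    have h : HasSum (fun t => f (j, t)) _ :=
      hasSum_sum_of_ne_finset_zero (s := Finset.range (n j)) fun t ht => by
        rw [hf, if_neg (by simpa using ht)]
    rwa [Finset.sum_congr rfl fun t ht => by rw [hf, if_pos (Finset.mem_range.mp ht)],
      Finset.sum_const, Finset.card_range, nsmul_eq_mul] at h
  have hsum : Summable f := (summable_prod_of_nonneg fun p => by
      rw [hf]; split_ifs <;> simp [hF p.1]).2
    ⟨fun j => (hfiber j).summable, by simpa only [(hfiber _).tsum_eq] using hs⟩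
  convert hsum.hasSum using 1
  rw [hsum.tsum_prod' fun j => (hfiber j).summable]
  exact tsum_congr fun j => (hfiber j).tsum_eq.symm

theorem div_le_one_of_hasSum_one (hw : 0 ≤ w) (h1 : HasSum w 1) (hn : ∀ j, n j ≠ 0) (j : ℕ) :
    w j / n j ≤ 1 :=
  div_le_one_of_le₀ ((le_hasSum h1 j fun i _ => hw i).trans
    (Nat.one_le_cast.mpr (Nat.one_le_iff_ne_zero.mpr (hn j)))) (Nat.cast_nonneg _)

theorem blockDist_nonneg (hw : 0 ≤ w) (i : ℕ) : 0 ≤ blockDist w n i := by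
  unfold blockDist
  split_ifs
  · exact div_nonneg (hw _) (Nat.cast_nonneg _)
  · exact le_rfl

theorem isProb_blockDist (hw : 0 ≤ w) (h1 : HasSum w 1) (hn : ∀ j, n j ≠ 0) :
    IsProb (blockDist w n) := by
  have hmass : ∀ j, (n j : ℝ) * (w j / n j) = w j := fun j =>
    mul_div_cancel₀ _ (Nat.cast_ne_zero.mpr (hn j))
  have h := hasSum_comp_blockDist (n := n) (F := id) rfl
    (fun j => div_nonneg (hw j) (Nat.cast_nonneg _))
    (by simpa only [id_eq, hmass] using h1.summable)
  simp only [id_eq, hmass, h1.tsum_eq] at h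
  exact ⟨blockDist_nonneg hw, h.tsum_eq⟩

theorem summable_mul_one_sub_div_pow (hw : 0 ≤ w) (h1 : HasSum w 1) (hn : ∀ j, n j ≠ 0)
    (m : ℕ) : Summable fun j => w j * (1 - w j / n j) ^ m := by
  have hc1 := div_le_one_of_hasSum_one hw h1 hn
  refine h1.summable.of_nonneg_of_le
    (fun j => mul_nonneg (hw j) (pow_nonneg (sub_nonneg.mpr (hc1 j)) m))
    fun j => mul_le_of_le_one_right (hw j) (pow_le_one₀ (sub_nonneg.mpr (hc1 j)) ?_)
  linarith [div_nonneg (hw j) (Nat.cast_nonneg (n j))]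

theorem tsum_blockDist_mul_one_sub_pow (hw : 0 ≤ w) (h1 : HasSum w 1) (hn : ∀ j, n j ≠ 0)
    (m : ℕ) : ∑' i, blockDist w n i * (1 - blockDist w n i) ^ m
      = ∑' j, w j * (1 - w j / n j) ^ m := by
  have hmass : ∀ j, (n j : ℝ) * (w j / n j * (1 - w j / n j) ^ m) = w j * (1 - w j / n j) ^ m :=
    fun j => by rw [← mul_assoc, mul_div_cancel₀ _ (Nat.cast_ne_zero.mpr (hn j))]
  have h := hasSum_comp_blockDist (n := n) (F := fun x => x * (1 - x) ^ m) (by simp)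
    (fun j => mul_nonneg (div_nonneg (hw j) (Nat.cast_nonneg _))
      (pow_nonneg (sub_nonneg.mpr (div_le_one_of_hasSum_one hw h1 hn j)) m))
    (by simpa only [hmass] using summable_mul_one_sub_div_pow hw h1 hn m)
  simpa only [hmass] using h.tsum_eq

end BlockDist

theorem one_sub_mul_le_one_sub_pow {c : ℝ} (hc0 : 0 ≤ c) (hc1 : c ≤ 1) {p q : ℕ} (hpq : p ≤ q) :
    1 - q * c ≤ (1 - c) ^ p := by
  have hbern := one_add_mul_le_pow (a := -c) (by linarith) p
  have hpq' : (p : ℝ) ≤ q := by exact_mod_cast hpq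
  rw [← sub_eq_add_neg] at hbern
  nlinarith

theorem mul_le_mul_one_sub_div_pow {a : ℝ} (ha0 : 0 ≤ a) (ha1 : a ≤ 1) {k j : ℕ} (hkj : k ≤ j)
    (K : ℕ) : (1 - 1 / ((K : ℝ) + 1)) * a ≤ a * (1 - a / ((j + 1) * (K + 1) : ℕ)) ^ (k + 1) := by
  have hK : (1 : ℝ) ≤ K + 1 := by simp
  have hj : (1 : ℝ) ≤ j + 1 := by simp
  have hc0 : 0 ≤ a / ((j + 1) * (K + 1) : ℕ) := by positivity
  have hc1 : a / ((j + 1) * (K + 1) : ℕ) ≤ 1 := by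
    push_cast
    exact div_le_one_of_le₀ (ha1.trans (one_le_mul_of_one_le_of_one_le hj hK)) (by positivity)
  have hbern := one_sub_mul_le_one_sub_pow hc0 hc1 (show k + 1 ≤ j + 1 by omega)
  have hq : ((j + 1 : ℕ) : ℝ) * (a / ((j + 1) * (K + 1) : ℕ)) ≤ 1 / ((K : ℝ) + 1) := by
    push_cast
    rw [← mul_div_assoc, mul_div_mul_left _ _ (by positivity)]
    exact div_le_div_of_nonneg_right ha1 (by positivity)
  rw [mul_comm]
  exact mul_le_mul_of_nonneg_left (by linarith) ha0

theorem exists_isProb_lt_tsum_mul_one_sub_pow {s : ℕ → ℝ} (hs : StrictAnti s)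
    (hlim : Tendsto s atTop (𝓝 0)) (hs0 : s 0 < 1) :
    ∃ μ : ℕ → ℝ, IsProb μ ∧ ∀ k, s k < ∑' i, μ i * (1 - μ i) ^ (k + 1) := by
  have hpos : ∀ k, 0 < s k := fun k =>
    (hs.antitone.le_of_tendsto hlim (k + 1)).trans_lt (hs k.lt_succ_self)
  obtain ⟨K, hK⟩ := exists_nat_one_div_lt (sub_pos.mpr hs0)
  set w : ℕ → ℝ := fun j => (s j - s (j + 1)) / s 0
  set n : ℕ → ℕ := fun j => (j + 1) * (K + 1)
  have hw : 0 ≤ w := fun j => div_nonneg (sub_nonneg.mpr (hs.antitone j.le_succ)) (hpos 0).le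
  have hw1 : ∀ k, HasSum (fun j => w (j + k)) (s k / s 0) := fun k => by
    simpa [add_right_comm] using
      ((hs.antitone.comp_monotone (add_left_mono (a := k))).hasSum_sub_succ
        ((tendsto_add_atTop_iff_nat k).mpr hlim)).div_const (s 0)
  have hn : ∀ j, n j ≠ 0 := fun j => Nat.mul_ne_zero j.succ_ne_zero K.succ_ne_zero
  have h1 : HasSum w 1 := by simpa [div_self (hpos 0).ne'] using hw1 0
  refine ⟨blockDist w n, isProb_blockDist hw h1 hn, fun k => ?_⟩
  rw [tsum_blockDist_mul_one_sub_pow hw h1 hn]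
  set θ : ℝ := 1 - 1 / ((K : ℝ) + 1)
  have hterm : ∀ j, θ * w (j + k) ≤ w (j + k) * (1 - w (j + k) / n (j + k)) ^ (k + 1) :=
    fun j => mul_le_mul_one_sub_div_pow (hw _) (le_hasSum h1 _ fun i _ => hw i)
      (Nat.le_add_left k j) K
  have hsum := summable_mul_one_sub_div_pow hw h1 hn (k + 1)
  calc s k < θ * (s k / s 0) := by
        rw [mul_div_assoc', lt_div_iff₀ (hpos 0)]
        nlinarith [hpos k]
    _ = ∑' j, θ * w (j + k) := by rw [tsum_mul_left, (hw1 k).tsum_eq]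
    _ ≤ ∑' j, w (j + k) * (1 - w (j + k) / n (j + k)) ^ (k + 1) :=
        Summable.tsum_le_tsum hterm ((hw1 k).summable.mul_left θ)
          ((summable_nat_add_iff k).mpr hsum)
    _ ≤ ∑' j, w j * (1 - w j / n j) ^ (k + 1) := by
        rw [← hsum.sum_add_tsum_nat_add k]
        exact le_add_of_nonneg_left (Finset.sum_nonneg fun j _ => mul_nonneg (hw j)
          (pow_nonneg (sub_nonneg.mpr (div_le_one_of_hasSum_one hw h1 hn j)) _))

/-- for any sequence `1 > r_1 > r_2 > …` strictly decreasing to `0`,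
there exists a probability distribution `μ` on ℕ such that for all `m ≥ 1`,
`2 E_{X ~ μ^m}[‖μ - μ̂_m‖_TV] > r_m`: the TV risk can converge arbitrarily slowly. -/
theorem tv_risk_arbitrarily_slow (r : ℕ → ℝ) (hr1 : r 1 < 1)
    (hanti : ∀ m n : ℕ, 1 ≤ m → m < n → r n < r m)
    (hlim : Filter.Tendsto r Filter.atTop (nhds 0)) :
    ∃ μ : ℕ → ℝ, IsProb μ ∧ ∀ m : ℕ, 1 ≤ m →
      r m < 2 * expect μ m (fun x => tvDist μ (empMeas m x)) := by
  have hs : StrictAnti fun k => r (k + 1) :=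
    strictAnti_nat_of_succ_lt fun k => hanti _ _ (by omega) (by omega)
  obtain ⟨μ, hμ, hlt⟩ :=
    exists_isProb_lt_tsum_mul_one_sub_pow hs ((tendsto_add_atTop_iff_nat 1).mpr hlim) hr1
  refine ⟨μ, hμ, fun m hm => ?_⟩
  obtain ⟨k, rfl⟩ := Nat.exists_eq_add_of_le' hm
  exact (hlt k).trans_le (tsum_mul_one_sub_pow_le_two_mul_expect_tvDist hμ k.succ_ne_zero)
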